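/- Let G be a finite group, g₀ ∈ G, Z the centralizer of g₀, C the conjugacy class of g₀, and τ : C → G a section with τ(c) g₀ τ(c)⁻¹ = c for all c ∈ C. Let V be a finite-dimensional complex vector space, ρ : Z →* (V →ₗ[ℂ] V)ˣ a representation, φ ∈ V* a linear functional, w ∈ V, and c, c' ∈ C. Define the linear operator F on ℂ[G] ⊗ ℂ[G] (i.e. on the free complex vector space on G × G) by F(e_{m₁} ⊗ e_{m₂}) := (∑_{n ∈ Z} φ(ρ(n) w) · (if m₁ = τ(c) n τ(c')⁻¹ then 1 else 0)) · (e_{m₁} ⊗ e_{c'·m₂}). If g₀ ≠ 1, or if g₀ = 1 and ρ is an irreducible representation of Z = G that is not the trivial representation, then Tr(F) = 0. (This is the statement that a shortest ribbon operator creating a nontrivial anyon pair is traceless.) -/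
import Mathlib


open scoped Classical

/-- The conjugacy class `{x g₀ x⁻¹ : x ∈ G}` of `g₀`. -/
def conjClass {G : Type*} [Group G] (g₀ : G) : Set G := {x | ∃ g : G, g * g₀ * g⁻¹ = x}

/-- The basis vector `e_{m₁} ⊗ e_{m₂}` of the free complex vector space
`ℂ[G] ⊗ ℂ[G]` on `G × G`. -/
def eGG {G : Type*} [DecidableEq G] (p : G × G) : G × G → ℂ := Pi.single p 1

/-- Averaging operator of an irreducible nontrivial representation vanishes. -/
lemma sum_rho_eq_zero {H : Type*} [Group H] [Fintype H] {V : Type*} [AddCommGroup V]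
    [Module ℂ V]
    (ρ : H →* (V →ₗ[ℂ] V)ˣ)
    (hirr : ∀ p : Submodule ℂ V,
        (∀ (n : H) (v : V), v ∈ p → (ρ n : V →ₗ[ℂ] V) v ∈ p) → p = ⊥ ∨ p = ⊤)
    (hnt : ¬ (∀ n : H, ρ n = 1)) :
    (∑ n : H, (ρ n : V →ₗ[ℂ] V)) = 0 := by
  classical
  set T := ∑ n : H, (ρ n : V →ₗ[ℂ] V) with hT
  have hmulT : ∀ m : H, (ρ m : V →ₗ[ℂ] V) * T = T := by
    intro m
    rw [hT, Finset.mul_sum]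
    refine Fintype.sum_equiv (Equiv.mulLeft m)
      (fun n => (ρ m : V →ₗ[ℂ] V) * (ρ n : V →ₗ[ℂ] V))
      (fun n => (ρ n : V →ₗ[ℂ] V)) (fun n => ?_)
    show (ρ m : V →ₗ[ℂ] V) * (ρ n : V →ₗ[ℂ] V) = ((ρ (m * n) : (V →ₗ[ℂ] V)ˣ) : V →ₗ[ℂ] V)
    rw [map_mul, Units.val_mul]
  have hrange : LinearMap.range T = ⊥ ∨ LinearMap.range T = ⊤ := by
    apply hirr
    rintro n v ⟨u, rfl⟩
    exact ⟨u, by rw [← Module.End.mul_apply, hmulT]⟩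
  rcases hrange with h0 | h1
  · exact LinearMap.range_eq_bot.mp h0
  · exfalso
    apply hnt
    intro n
    refine Units.ext (LinearMap.ext fun v => ?_)
    obtain ⟨u, rfl⟩ : ∃ u, T u = v := (LinearMap.range_eq_top.mp h1) v
    show (ρ n : V →ₗ[ℂ] V) (T u) = ((1 : (V →ₗ[ℂ] V)ˣ) : V →ₗ[ℂ] V) (T u)
    rw [← Module.End.mul_apply, hmulT]
    simp

/-- A shortest ribbon operator creating a nontrivial anyon pair is traceless:
if `F (e_{m₁} ⊗ e_{m₂}) = (∑_{n ∈ Z} φ(ρ(n)w) [m₁ = τ_c n τ_{c'}⁻¹]) • e_{m₁} ⊗ e_{c' m₂}`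
and either `g₀ ≠ 1`, or `g₀ = 1` and `ρ` is irreducible and nontrivial,
then `Tr F = 0`. -/
theorem ribbon_operator_traceless {G : Type*} [Group G] [Fintype G] [DecidableEq G]
    {V : Type*} [AddCommGroup V] [Module ℂ V] [FiniteDimensional ℂ V]
    (g₀ : G) (τ : conjClass g₀ → G)
    (hτ : ∀ c : conjClass g₀, τ c * g₀ * (τ c)⁻¹ = (c : G))
    (ρ : Subgroup.centralizer ({g₀} : Set G) →* (V →ₗ[ℂ] V)ˣ)
    (φ : V →ₗ[ℂ] ℂ) (w : V) (c c' : conjClass g₀)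
    (F : ((G × G) → ℂ) →ₗ[ℂ] ((G × G) → ℂ))
    (hF : ∀ m₁ m₂ : G,
      F (eGG (m₁, m₂)) =
        (∑ n : Subgroup.centralizer ({g₀} : Set G),
            φ ((ρ n : V →ₗ[ℂ] V) w)
              * (if m₁ = τ c * (n : G) * (τ c')⁻¹ then 1 else 0))
          • eGG (m₁, (c' : G) * m₂))
    (h : g₀ ≠ 1 ∨
      (g₀ = 1 ∧
        (∀ p : Submodule ℂ V,
            (∀ (n : Subgroup.centralizer ({g₀} : Set G)) (v : V),
                v ∈ p → (ρ n : V →ₗ[ℂ] V) v ∈ p) →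
            p = ⊥ ∨ p = ⊤) ∧
        ¬(∀ n : Subgroup.centralizer ({g₀} : Set G), ρ n = 1))) :
    LinearMap.trace ℂ ((G × G) → ℂ) F = 0 := by
  classical
  have hbasis : ∀ p : G × G, (Pi.basisFun ℂ (G × G)) p = eGG p := by
    intro p
    ext q
    simp [eGG, Pi.basisFun_apply]
  have htr : LinearMap.trace ℂ ((G × G) → ℂ) F = ∑ p : G × G, F (eGG p) p := by
    rw [LinearMap.trace_eq_matrix_trace ℂ (Pi.basisFun ℂ (G × G)) F, Matrix.trace]
    refine Finset.sum_congr rfl fun p _ => ?_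
    rw [Matrix.diag_apply, LinearMap.toMatrix_apply, hbasis, Pi.basisFun_repr]
  rw [htr]
  have hdiag : ∀ p : G × G,
      F (eGG p) p =
        (∑ n : Subgroup.centralizer ({g₀} : Set G), φ ((ρ n : V →ₗ[ℂ] V) w)
            * (if p.1 = τ c * (n : G) * (τ c')⁻¹ then 1 else 0))
          * (if (c' : G) * p.2 = p.2 then 1 else 0) := by
    rintro ⟨m₁, m₂⟩
    rw [hF m₁ m₂]
    simp only [Pi.smul_apply, smul_eq_mul, eGG]
    congr 1
    by_cases hc : (c' : G) * m₂ = m₂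
    · rw [if_pos hc, hc, Pi.single_eq_same]
    · rw [if_neg hc, Pi.single_eq_of_ne (fun hpe => hc ((Prod.ext_iff.mp hpe).2).symm)]
  rcases h with hg | ⟨hg, hirr, hnt⟩
  · -- g₀ ≠ 1 : c' ≠ 1 so all diagonal terms vanish
    have hc' : (c' : G) ≠ 1 := by
      obtain ⟨g, hgc⟩ := c'.2
      intro h1
      apply hg
      have h2 : g * g₀ * g⁻¹ = 1 := by rw [hgc, h1]
      have := congrArg (fun x => g⁻¹ * x * g) h2
      simpa [mul_assoc] using this
    refine Finset.sum_eq_zero fun p _ => ?_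
    rw [hdiag p, if_neg, mul_zero]
    intro h1
    exact hc' (by
      have := congrArg (fun x => x * p.2⁻¹) h1
      simpa using this)
  · -- g₀ = 1 : c' = 1, sum reduces to |G| • φ (T w) with T = 0
    have hc' : (c' : G) = 1 := by
      obtain ⟨g, hgc⟩ := c'.2
      rw [← hgc, hg]
      simp
    have hT : (∑ n : Subgroup.centralizer ({g₀} : Set G), (ρ n : V →ₗ[ℂ] V)) = 0 :=
      sum_rho_eq_zero ρ hirr hnt
    calc ∑ p : G × G, F (eGG p) p
        = ∑ p : G × G, ∑ n : Subgroup.centralizer ({g₀} : Set G),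
            φ ((ρ n : V →ₗ[ℂ] V) w)
            * (if p.1 = τ c * (n : G) * (τ c')⁻¹ then 1 else 0) := by
          refine Finset.sum_congr rfl fun p _ => ?_
          rw [hdiag p, if_pos (by rw [hc', one_mul]), mul_one]
      _ = ∑ m₁ : G, ∑ m₂ : G, ∑ n : Subgroup.centralizer ({g₀} : Set G),
            φ ((ρ n : V →ₗ[ℂ] V) w)
            * (if m₁ = τ c * (n : G) * (τ c')⁻¹ then 1 else 0) := by
          rw [Fintype.sum_prod_type]
      _ = (Fintype.card G : ℂ) * ∑ m₁ : G, ∑ n : Subgroup.centralizer ({g₀} : Set G),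
            φ ((ρ n : V →ₗ[ℂ] V) w)
            * (if m₁ = τ c * (n : G) * (τ c')⁻¹ then 1 else 0) := by
          simp_rw [Finset.sum_const, Finset.card_univ, nsmul_eq_mul, ← Finset.mul_sum]
      _ = (Fintype.card G : ℂ)
            * ∑ n : Subgroup.centralizer ({g₀} : Set G), φ ((ρ n : V →ₗ[ℂ] V) w) := by
          congr 1
          rw [Finset.sum_comm]
          refine Finset.sum_congr rfl fun n _ => ?_
          rw [← Finset.mul_sum]
          simp
      _ = 0 := by
          have heq : (∑ n : Subgroup.centralizer ({g₀} : Set G), φ ((ρ n : V →ₗ[ℂ] V) w))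
              = φ ((∑ n : Subgroup.centralizer ({g₀} : Set G), (ρ n : V →ₗ[ℂ] V)) w) := by
            rw [LinearMap.sum_apply, map_sum]
          rw [heq, hT]
          simp
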